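/- arXiv:1408.4710 — 2 statements merged into one kernel-verified Lean document; each statement's English description precedes it below -/
import Mathlib

section
/- Let S(A) = {a_n} be a Stanley sequence and let S(0) = {s_n} be the Stanley sequence of {0}. Then S(A) is independent if and only if there exist a constant α and a periodic sequence {b_n} of period 2^κ (for some constant κ, with 2^κ the exact period) such that a_n = α·s_n + b_n for every n. Moreover, when this holds, α is the scaling factor of S(A) and κ = κ(A). -/
/-- A set of integers is 3-free if it contains no 3-term arithmetic progression. -/
def ThreeFreeSet (S : Set ℤ) : Prop :=
  ∀ x ∈ S, ∀ y ∈ S, ∀ z ∈ S, x < y → y < z → x + z ≠ 2 * y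

/-- `a` is the Stanley sequence generated greedily from the finite 3-free set `A`
of nonnegative integers containing 0: `a` first enumerates `A` in increasing order,
and for `n ≥ |A|`, `a n` is the least integer exceeding `a (n-1)` keeping the
set of terms so far 3-free. -/
def IsStanleySeq (A : Finset ℤ) (a : ℕ → ℤ) : Prop :=
  (0 : ℤ) ∈ A ∧ (∀ x ∈ A, 0 ≤ x) ∧ ThreeFreeSet ↑A ∧
  StrictMono a ∧ (∀ i < A.card, a i ∈ A) ∧
  ∀ n, A.card ≤ n →
    IsLeast {m : ℤ | a (n - 1) < m ∧ ThreeFreeSet (a '' Set.Iio n ∪ {m})} (a n)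

/-- The two defining conditions of an independent Stanley sequence,
for a given λ and κ. -/
def IndepParams (a : ℕ → ℤ) (lam : ℤ) (κ : ℕ) : Prop :=
  ∀ k, κ ≤ k →
    (∀ i < 2 ^ k, a (2 ^ k + i) = a (2 ^ k) + a i) ∧
    a (2 ^ k) = 2 * a (2 ^ k - 1) + 1 - lam

/-- A Stanley sequence is independent if `IndepParams` holds for some λ and κ. -/
def Independent (a : ℕ → ℤ) : Prop := ∃ lam κ, IndepParams a lam κ

/-- κ(A): the minimal κ witnessing independence. -/
noncomputable def kappa (a : ℕ → ℤ) : ℕ := sInf {κ | ∃ lam, IndepParams a lam κ}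

/-- λ(A), recovered from the defining equation at k = κ(A). -/
noncomputable def lambdaA (a : ℕ → ℤ) : ℤ :=
  2 * a (2 ^ kappa a - 1) + 1 - a (2 ^ kappa a)

/-- The repeat factor ρ(A) = a_{2^{κ(A)}}. -/
noncomputable def rho (a : ℕ → ℤ) : ℤ := a (2 ^ kappa a)

/-- The scaling factor α(A), satisfying a_{2^k} = α·3^k for all k ≥ κ(A). -/
noncomputable def scalingFactor (a : ℕ → ℤ) : ℚ :=
  (a (2 ^ kappa a) : ℚ) / 3 ^ kappa a

/-- An integer `x` is covered by a set `S` if there are `y < z < x` in `S`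
with `y, z, x` in arithmetic progression. -/
def Covers (S : Set ℤ) (x : ℤ) : Prop :=
  ∃ y z, y ∈ S ∧ z ∈ S ∧ y < z ∧ z < x ∧ 2 * z = y + x

/-- An integer `x` is jointly covered by `S` and `T` if there are `y < z < x`
with `y ∈ S`, `z ∈ T`, and `y, z, x` in arithmetic progression. -/
def JointlyCovers (S T : Set ℤ) (x : ℤ) : Prop :=
  ∃ y z, y ∈ S ∧ z ∈ T ∧ y < z ∧ z < x ∧ 2 * z = y + x

/-- O(A): nonnegative integers neither in the Stanley sequence nor covered by it. -/
def OSet (a : ℕ → ℤ) : Set ℤ :=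
  {x | 0 ≤ x ∧ x ∉ Set.range a ∧ ¬ Covers (Set.range a) x}

/-- ω(A): the maximum element of O(A). -/
noncomputable def omegaA (a : ℕ → ℤ) : ℤ := sSup (OSet a)

/-- The translate `S + t` of a set of integers. -/
def shift (S : Set ℤ) (t : ℤ) : Set ℤ := (· + t) '' S

/-- A triadic number: a rational whose denominator in lowest terms is a power of 3. -/
def IsTriadic (q : ℚ) : Prop := ∃ j : ℕ, q.den = 3 ^ j

/-!
The Stanley sequence `s` of `{0}` is `binaryAsTernary`: write `n` in binary, read it in base 3.
Its range is 3-free: the last ternary digits of a progression in it agree, so dropping them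
leaves a shorter progression. Any other `m ≥ 0` ends the progression `y, z, m` in which `z` caps
the ternary digits of `m` at `1` and `y` keeps only its digits equal to `1`; so the greedy choice
always picks the next term of `s`.

Since `s (2 ^ k + i) = 3 ^ k + s i` for `i < 2 ^ k`, a decomposition `a = α s + b` with `b` of
period `2 ^ κ` makes `a` independent from `κ` on, with `a (2 ^ k) = α 3 ^ k`; conversely,
independence from `κ` on makes `a - α s` periodic of period `2 ^ κ`, as `n = 2 ^ k + i`. A period
`m < 2 ^ κ(A)` of `b` would give the period `gcd m 2 ^ κ(A) = 2 ^ j` with `j < κ(A)`, against the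
minimality of `κ(A)`. Finally `a (2 ^ k) = α 3 ^ k` for large `k` pins down `α`, hence `b`.
-/

open Function

def binaryAsTernary (n : ℕ) : ℤ := Nat.ofDigits 3 (Nat.digits 2 n)

@[simp]
lemma binaryAsTernary_zero : binaryAsTernary 0 = 0 := by
  simp [binaryAsTernary, Nat.ofDigits]

lemma binaryAsTernary_add_two_mul {d : ℕ} (hd : d < 2) (n : ℕ) :
    binaryAsTernary (d + 2 * n) = d + 3 * binaryAsTernary n := by
  rcases Nat.eq_zero_or_pos d with rfl | hd0
  · rcases Nat.eq_zero_or_pos n with rfl | hn0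
    · simp
    · rw [binaryAsTernary, Nat.digits_add 2 one_lt_two 0 n hd (Or.inr hn0.ne')]
      simp [Nat.ofDigits, binaryAsTernary]
  · rw [binaryAsTernary, Nat.digits_add 2 one_lt_two d n hd (Or.inl hd0.ne')]
    rfl

lemma binaryAsTernary_eq (n : ℕ) :
    binaryAsTernary n = (n % 2 : ℕ) + 3 * binaryAsTernary (n / 2) := by
  conv_lhs => rw [← Nat.mod_add_div n 2]
  exact binaryAsTernary_add_two_mul (Nat.mod_lt n two_pos) _

lemma ofDigits_three_eq_binaryAsTernary {L : List ℕ} (hL : ∀ d ∈ L, d < 2) :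
    Nat.ofDigits 3 L = binaryAsTernary (Nat.ofDigits 2 L) := by
  induction L with
  | nil => simp [Nat.ofDigits]
  | cons d L ih =>
    rw [Nat.ofDigits_cons, binaryAsTernary_add_two_mul (hL d List.mem_cons_self),
      ← ih fun e he => hL e (List.mem_cons_of_mem d he)]
    rfl

lemma binaryAsTernary_two_pow_add {k i : ℕ} (hi : i < 2 ^ k) :
    binaryAsTernary (2 ^ k + i) = 3 ^ k + binaryAsTernary i := by
  induction k generalizing i with
  | zero =>
    obtain rfl : i = 0 := by simpa using hi
    simpa using binaryAsTernary_add_two_mul one_lt_two 0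
  | succ k ih =>
    have hhalf : (2 ^ (k + 1) + i) / 2 = 2 ^ k + i / 2 := by rw [pow_succ]; omega
    have hpar : (2 ^ (k + 1) + i) % 2 = i % 2 := by rw [pow_succ]; omega
    rw [binaryAsTernary_eq, hhalf, hpar, ih (by rw [pow_succ] at hi; omega),
      binaryAsTernary_eq i]
    ring

lemma binaryAsTernary_two_pow (k : ℕ) : binaryAsTernary (2 ^ k) = 3 ^ k := by
  simpa using binaryAsTernary_two_pow_add (Nat.two_pow_pos k)

lemma binaryAsTernary_strictMono : StrictMono binaryAsTernary := by
  refine strictMono_nat_of_lt_succ fun n => ?_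
  induction n using Nat.strong_induction_on with
  | _ n ih =>
    rw [binaryAsTernary_eq n, binaryAsTernary_eq (n + 1)]
    rcases Nat.mod_two_eq_zero_or_one n with hn | hn
    · rw [show (n + 1) / 2 = n / 2 by omega, show (n + 1) % 2 = 1 by omega, hn]
      simp
    · have := ih (n / 2) (by omega)
      rw [show (n + 1) / 2 = n / 2 + 1 by omega, show (n + 1) % 2 = 0 by omega, hn]
      push_cast
      linarith

lemma binaryAsTernary_nonneg (n : ℕ) : 0 ≤ binaryAsTernary n :=
  binaryAsTernary_zero ▸ binaryAsTernary_strictMono.monotone n.zero_le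

lemma binaryAsTernary_add_ne_two_mul (p q r : ℕ) (hpq : binaryAsTernary p < binaryAsTernary q)
    (hqr : binaryAsTernary q < binaryAsTernary r) :
    binaryAsTernary p + binaryAsTernary r ≠ 2 * binaryAsTernary q := by
  induction r using Nat.strong_induction_on generalizing p q with
  | _ r ih =>
    intro hap
    have hr0 : 0 < r := binaryAsTernary_strictMono.lt_iff_lt.mp
      ((binaryAsTernary_nonneg p).trans_lt (hpq.trans hqr))
    have hp' := binaryAsTernary_eq p
    have hq' := binaryAsTernary_eq q
    have hr' := binaryAsTernary_eq r
    have hhalf : binaryAsTernary (p / 2) < binaryAsTernary (q / 2) ∧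
        binaryAsTernary (q / 2) < binaryAsTernary (r / 2) ∧
        binaryAsTernary (p / 2) + binaryAsTernary (r / 2) = 2 * binaryAsTernary (q / 2) := by
      rcases Nat.mod_two_eq_zero_or_one p with hp | hp <;>
        rcases Nat.mod_two_eq_zero_or_one q with hq | hq <;>
        rcases Nat.mod_two_eq_zero_or_one r with hr | hr <;>
        simp only [hp, hq, hr] at * <;> omega
    exact ih (r / 2) (by omega) (p / 2) (q / 2) hhalf.1 hhalf.2.1 hhalf.2.2

lemma threeFreeSet_range_binaryAsTernary : ThreeFreeSet (Set.range binaryAsTernary) := by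
  rintro _ ⟨p, rfl⟩ _ ⟨q, rfl⟩ _ ⟨r, rfl⟩ hpq hqr
  exact binaryAsTernary_add_ne_two_mul p q r hpq hqr

def mapTernaryDigits (g : ℕ → ℕ) (m : ℕ) : ℕ := Nat.ofDigits 3 ((Nat.digits 3 m).map g)

lemma mapTernaryDigits_eq {g : ℕ → ℕ} (hg : g 0 = 0) (m : ℕ) :
    mapTernaryDigits g m = g (m % 3) + 3 * mapTernaryDigits g (m / 3) := by
  rcases Nat.eq_zero_or_pos m with rfl | hm
  · simp [mapTernaryDigits, hg]
  · rw [mapTernaryDigits, Nat.digits_def' (by norm_num) hm, List.map_cons, Nat.ofDigits_cons]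
    rfl

lemma mapTernaryDigits_le {g : ℕ → ℕ} (hg : ∀ d, g d ≤ d) (m : ℕ) :
    mapTernaryDigits g m ≤ m := by
  induction m using Nat.strong_induction_on with
  | _ m ih =>
    rcases Nat.eq_zero_or_pos m with rfl | hm
    · simp [mapTernaryDigits]
    · rw [mapTernaryDigits_eq (Nat.le_zero.mp (hg 0))]
      have := ih (m / 3) (Nat.div_lt_self hm (by norm_num))
      have := hg (m % 3)
      omega

lemma mapTernaryDigits_mem_range {g : ℕ → ℕ} (hg : ∀ d, g d < 2) (m : ℕ) :
    (mapTernaryDigits g m : ℤ) ∈ Set.range binaryAsTernary := by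
  refine ⟨Nat.ofDigits 2 ((Nat.digits 3 m).map g), ?_⟩
  rw [← ofDigits_three_eq_binaryAsTernary (by simpa using fun d _ => hg d), mapTernaryDigits,
    Nat.coe_ofDigits]
  rfl

lemma mapTernaryDigits_mod_two_add (m : ℕ) :
    mapTernaryDigits (· % 2) m + m = 2 * mapTernaryDigits (min · 1) m := by
  induction m using Nat.strong_induction_on with
  | _ m ih =>
    rcases Nat.eq_zero_or_pos m with rfl | hm
    · simp [mapTernaryDigits]
    · rw [mapTernaryDigits_eq (g := (· % 2)) rfl m, mapTernaryDigits_eq (g := (min · 1)) rfl m]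
      have := ih (m / 3) (Nat.div_lt_self hm (by norm_num))
      omega

lemma exists_binaryAsTernary_add_eq_two_mul {m : ℤ} (hm0 : 0 ≤ m)
    (hm : m ∉ Set.range binaryAsTernary) :
    ∃ p q, binaryAsTernary p < binaryAsTernary q ∧ binaryAsTernary q < m ∧
      binaryAsTernary p + m = 2 * binaryAsTernary q := by
  lift m to ℕ using hm0
  obtain ⟨p, hp⟩ := mapTernaryDigits_mem_range (g := (· % 2)) (fun d => Nat.mod_lt d two_pos) m
  obtain ⟨q, hq⟩ := mapTernaryDigits_mem_range (g := (min · 1)) (fun d => by omega) m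
  have hle := mapTernaryDigits_le (g := (min · 1)) (fun d => min_le_left d 1) m
  have hne : mapTernaryDigits (min · 1) m ≠ m := fun h => hm ⟨q, by rw [hq, h]⟩
  have hsum := mapTernaryDigits_mod_two_add m
  exact ⟨p, q, by omega, by omega, by omega⟩

lemma isStanleySeq_binaryAsTernary : IsStanleySeq {0} binaryAsTernary := by
  refine ⟨Finset.mem_singleton_self 0, by simp, fun x hx y hy _ _ hxy => by simp_all,
    binaryAsTernary_strictMono, by simp,
    fun n hn => ⟨⟨?_, ?_⟩, fun m ⟨hlt, hfree⟩ => ?_⟩⟩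
  all_goals rw [Finset.card_singleton] at hn
  · exact binaryAsTernary_strictMono (by omega)
  · have hsub :
        binaryAsTernary '' Set.Iio n ∪ {binaryAsTernary n} ⊆ Set.range binaryAsTernary :=
      Set.union_subset (Set.image_subset_range _ _) (Set.singleton_subset_iff.mpr ⟨n, rfl⟩)
    exact fun x hx y hy z hz =>
      threeFreeSet_range_binaryAsTernary x (hsub hx) y (hsub hy) z (hsub hz)
  · by_contra! hgt
    have hm : m ∉ Set.range binaryAsTernary := by
      rintro ⟨j, rfl⟩
      have := binaryAsTernary_strictMono.lt_iff_lt.mp hlt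
      have := binaryAsTernary_strictMono.lt_iff_lt.mp hgt
      omega
    obtain ⟨p, q, hpq, hqm, hap⟩ := exists_binaryAsTernary_add_eq_two_mul
      ((binaryAsTernary_nonneg _).trans hlt.le) hm
    have hq := binaryAsTernary_strictMono.lt_iff_lt.mp (hqm.trans hgt)
    have hp := binaryAsTernary_strictMono.lt_iff_lt.mp (hpq.trans (hqm.trans hgt))
    exact hfree _ (Or.inl ⟨p, hp, rfl⟩) _ (Or.inl ⟨q, hq, rfl⟩) m (Or.inr rfl) hpq hqm hap

namespace IsStanleySeq

variable {A : Finset ℤ} {a : ℕ → ℤ}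

lemma apply_eq_orderEmbOfFin (hA : IsStanleySeq A a) (i : Fin A.card) :
    a i = A.orderEmbOfFin rfl i := by
  obtain ⟨-, -, -, hmono, hinit, -⟩ := hA
  exact congrFun (Finset.orderEmbOfFin_unique rfl (fun i => hinit i i.2)
    (hmono.comp Fin.val_strictMono)) i

lemma apply_zero (hA : IsStanleySeq A a) : a 0 = 0 := by
  have ⟨h0, hnonneg, _, _, hinit, _⟩ := hA
  have hpos : 0 < A.card := Finset.card_pos.mpr ⟨0, h0⟩
  have hmin : a 0 = A.min' ⟨0, h0⟩ := by
    rw [← Finset.orderEmbOfFin_zero rfl hpos]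
    exact hA.apply_eq_orderEmbOfFin ⟨0, hpos⟩
  exact le_antisymm (hmin ▸ A.min'_le 0 h0) (hnonneg _ (hinit 0 hpos))

lemma unique {a' : ℕ → ℤ} (hA : IsStanleySeq A a) (hA' : IsStanleySeq A a') : a = a' := by
  funext n
  induction n using Nat.strong_induction_on with
  | _ n ih =>
    rcases lt_or_ge n A.card with hn | hn
    · exact (hA.apply_eq_orderEmbOfFin ⟨n, hn⟩).trans
        (hA'.apply_eq_orderEmbOfFin ⟨n, hn⟩).symm
    · have ⟨h0, _, _, _, _, hgreedy⟩ := hA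
      have ⟨_, _, _, _, _, hgreedy'⟩ := hA'
      have hpos : 0 < n := (Finset.card_pos.mpr ⟨0, h0⟩).trans_le hn
      have hleast := hgreedy n hn
      have himage : a '' Set.Iio n = a' '' Set.Iio n := Set.image_congr fun i hi => ih i hi
      rw [himage, ih (n - 1) (by omega)] at hleast
      exact hleast.unique (hgreedy' n hn)

end IsStanleySeq

lemma Function.Periodic.nat_gcd {X : Type*} {f : ℕ → X} {p q : ℕ} (hp : Periodic f p)
    (hq : Periodic f q) : Periodic f (p.gcd q) := by
  induction p, q using Nat.gcd.induction with
  | H0 q => simpa using hq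
  | H1 p q _ ih =>
    rw [Nat.gcd_rec]
    refine ih (fun n => ?_) hp
    rw [← hp.nat_mul (q / p) (n + q % p), Nat.cast_id, add_assoc, Nat.mod_add_div' q p]
    exact hq n

lemma Function.Periodic.two_pow_of_le {X : Type*} {f : ℕ → X} {κ k : ℕ}
    (hf : Periodic f (2 ^ κ)) (hk : κ ≤ k) : Periodic f (2 ^ k) := by
  obtain ⟨c, hc⟩ := pow_dvd_pow 2 hk
  rw [hc, mul_comm]
  exact hf.nat_mul c

lemma periodic_two_pow_of_apply_two_pow_add {X : Type*} {g : ℕ → X} {κ : ℕ}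
    (h : ∀ k, κ ≤ k → ∀ i < 2 ^ k, g (2 ^ k + i) = g i) : Periodic g (2 ^ κ) := by
  have hmod : ∀ n, g n = g (n % 2 ^ κ) := by
    intro n
    induction n using Nat.strong_induction_on with
    | _ n ih =>
      rcases lt_or_ge n (2 ^ κ) with hn | hn
      · rw [Nat.mod_eq_of_lt hn]
      · have hn0 : n ≠ 0 := (Nat.two_pow_pos κ).trans_le hn |>.ne'
        have hlow := Nat.pow_log_le_self 2 hn0
        have hhigh := Nat.lt_pow_succ_log_self one_lt_two n
        have hκ : κ ≤ Nat.log 2 n := Nat.le_log_of_pow_le one_lt_two hn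
        generalize Nat.log 2 n = k at hlow hhigh hκ
        obtain ⟨i, rfl⟩ := Nat.exists_eq_add_of_le hlow
        obtain ⟨c, hc⟩ := pow_dvd_pow 2 hκ
        rw [h _ hκ i (by rw [pow_succ] at hhigh; omega), ih i (by omega), hc,
          Nat.mul_add_mod]
  intro n
  rw [hmod, Nat.add_mod_right, ← hmod]

lemma two_pow_succ_sub_one (k : ℕ) : 2 ^ (k + 1) - 1 = 2 ^ k + (2 ^ k - 1) := by
  have := Nat.two_pow_pos k
  rw [pow_succ]
  omega

/-- The second condition of independence propagates from `κ` upwards, since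
`a (2 ^ (k + 1) - 1) = a (2 ^ k) + a (2 ^ k - 1)`. -/
lemma indepParams_of_apply_two_pow_add {a : ℕ → ℤ} {κ : ℕ}
    (hadd : ∀ k, κ ≤ k → ∀ i < 2 ^ k, a (2 ^ k + i) = a (2 ^ k) + a i)
    (htriple : ∀ k, κ ≤ k → a (2 ^ (k + 1)) = 3 * a (2 ^ k)) :
    IndepParams a (2 * a (2 ^ κ - 1) + 1 - a (2 ^ κ)) κ := by
  refine fun k hk => ⟨hadd k hk, ?_⟩
  induction k, hk using Nat.le_induction with
  | base => ring
  | succ k hk ih =>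
    rw [htriple k hk, two_pow_succ_sub_one,
      hadd k hk _ (Nat.sub_lt (Nat.two_pow_pos k) one_pos)]
    linarith

namespace IndepParams

variable {a : ℕ → ℤ} {lam : ℤ} {κ : ℕ}

lemma apply_two_pow_succ (h : IndepParams a lam κ) {k : ℕ} (hk : κ ≤ k) :
    a (2 ^ (k + 1)) = 3 * a (2 ^ k) := by
  obtain ⟨hadd, hdouble⟩ := h k hk
  rw [(h (k + 1) (hk.trans k.le_succ)).2, two_pow_succ_sub_one,
    hadd _ (Nat.sub_lt (Nat.two_pow_pos k) one_pos)]
  linarith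

lemma apply_two_pow (h : IndepParams a lam κ) {k : ℕ} (hk : κ ≤ k) :
    (a (2 ^ k) : ℚ) = a (2 ^ κ) / 3 ^ κ * 3 ^ k := by
  induction k, hk using Nat.le_induction with
  | base => field_simp
  | succ k hk ih =>
    rw [h.apply_two_pow_succ hk, Int.cast_mul, ih, pow_succ]
    push_cast
    ring

lemma periodic_sub (h : IndepParams a lam κ) :
    Periodic (fun n => (a n : ℚ) - a (2 ^ κ) / 3 ^ κ * binaryAsTernary n) (2 ^ κ) :=
  periodic_two_pow_of_apply_two_pow_add fun k hk i hi => by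
    rw [(h k hk).1 i hi, binaryAsTernary_two_pow_add hi]
    push_cast
    rw [h.apply_two_pow hk]
    ring

end IndepParams

def IsScalingDecomposition (a s : ℕ → ℤ) (α : ℚ) (κ : ℕ) (b : ℕ → ℚ) : Prop :=
  Periodic b (2 ^ κ) ∧ (∀ m : ℕ, 0 < m → Periodic b m → 2 ^ κ ≤ m) ∧
    ∀ n, (a n : ℚ) = α * s n + b n

section Decomposition

variable {a : ℕ → ℤ} {α : ℚ} {κ : ℕ} {b : ℕ → ℚ}

lemma apply_two_pow_of_decomposition (ha0 : a 0 = 0) (hb : Periodic b (2 ^ κ))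
    (hd : ∀ n, (a n : ℚ) = α * binaryAsTernary n + b n) {k : ℕ} (hk : κ ≤ k) :
    (a (2 ^ k) : ℚ) = α * 3 ^ k := by
  have hb0 : b 0 = 0 := (by simpa [ha0] using hd 0 : (0 : ℚ) = b 0).symm
  have hbk : b (2 ^ k) = 0 := by simpa [hb0] using hb.two_pow_of_le hk 0
  simpa [hbk, binaryAsTernary_two_pow] using hd (2 ^ k)

lemma indepParams_of_decomposition (ha0 : a 0 = 0) (hb : Periodic b (2 ^ κ))
    (hd : ∀ n, (a n : ℚ) = α * binaryAsTernary n + b n) :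
    IndepParams a (2 * a (2 ^ κ - 1) + 1 - a (2 ^ κ)) κ := by
  have hpow := fun k (hk : κ ≤ k) => apply_two_pow_of_decomposition ha0 hb hd hk
  refine indepParams_of_apply_two_pow_add (fun k hk i hi => ?_) (fun k hk => ?_)
  · have hbi : b (2 ^ k + i) = b i := by rw [add_comm]; exact hb.two_pow_of_le hk i
    exact_mod_cast show (a (2 ^ k + i) : ℚ) = a (2 ^ k) + a i by
      rw [hd, hd i, hpow k hk, binaryAsTernary_two_pow_add hi, hbi]
      push_cast
      ring
  · exact_mod_cast show (a (2 ^ (k + 1)) : ℚ) = 3 * a (2 ^ k) by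
      rw [hpow k hk, hpow (k + 1) (hk.trans k.le_succ), pow_succ]
      ring

lemma independent_of_isScalingDecomposition (ha0 : a 0 = 0)
    (h : IsScalingDecomposition a binaryAsTernary α κ b) : Independent a :=
  ⟨_, _, indepParams_of_decomposition ha0 h.1 h.2.2⟩

lemma isScalingDecomposition_of_independent (ha0 : a 0 = 0) (h : Independent a) :
    IsScalingDecomposition a binaryAsTernary (scalingFactor a) (kappa a)
      (fun n => a n - scalingFactor a * binaryAsTernary n) := by
  obtain ⟨lam, hP⟩ : ∃ lam, IndepParams a lam (kappa a) := by
    obtain ⟨lam, κ, h⟩ := h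
    exact Nat.sInf_mem (s := {κ | ∃ lam, IndepParams a lam κ}) ⟨κ, lam, h⟩
  have hd : ∀ n, (a n : ℚ) = scalingFactor a * binaryAsTernary n +
      (a n - scalingFactor a * binaryAsTernary n) := fun n => by ring
  refine ⟨hP.periodic_sub, fun m hm hbm => ?_, hd⟩
  obtain ⟨j, -, hgcd⟩ :=
    (Nat.dvd_prime_pow Nat.prime_two).mp (Nat.gcd_dvd_right m (2 ^ kappa a))
  have hkappa : kappa a ≤ j :=
    Nat.sInf_le ⟨_, indepParams_of_decomposition ha0 (hgcd ▸ hbm.nat_gcd hP.periodic_sub) hd⟩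
  calc 2 ^ kappa a ≤ 2 ^ j := Nat.pow_le_pow_right two_pos hkappa
    _ = m.gcd (2 ^ kappa a) := hgcd.symm
    _ ≤ m := Nat.le_of_dvd hm (Nat.gcd_dvd_left _ _)

lemma IsScalingDecomposition.unique (ha0 : a 0 = 0) {α' : ℚ} {κ' : ℕ} {b' : ℕ → ℚ}
    (h : IsScalingDecomposition a binaryAsTernary α κ b)
    (h' : IsScalingDecomposition a binaryAsTernary α' κ' b') : α = α' ∧ κ = κ' := by
  obtain ⟨hb, hmin, hd⟩ := h
  obtain ⟨hb', hmin', hd'⟩ := h'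
  obtain rfl : α = α' := mul_right_cancel₀ (pow_ne_zero (max κ κ') three_ne_zero)
    ((apply_two_pow_of_decomposition ha0 hb hd (le_max_left κ κ')).symm.trans
      (apply_two_pow_of_decomposition ha0 hb' hd' (le_max_right κ κ')))
  obtain rfl : b = b' := funext fun n => by linarith [hd n, hd' n]
  exact ⟨rfl, Nat.pow_right_injective le_rfl
    ((hmin _ (Nat.two_pow_pos κ') hb').antisymm (hmin' _ (Nat.two_pow_pos κ) hb))⟩

end Decomposition

/-- S(A) is independent iff a_n = α·s_n + b_n with {b_n} periodic of
exact period 2^κ; in that case α is the scaling factor and κ = κ(A). -/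
theorem independent_iff_scaling_decomposition (A : Finset ℤ) (a s : ℕ → ℤ)
    (hA : IsStanleySeq A a) (hs : IsStanleySeq {0} s) :
    (Independent a ↔
      ∃ (α : ℚ) (κ : ℕ) (b : ℕ → ℚ),
        Function.Periodic b (2 ^ κ) ∧
        (∀ m : ℕ, 0 < m → Function.Periodic b m → 2 ^ κ ≤ m) ∧
        ∀ n : ℕ, (a n : ℚ) = α * (s n : ℚ) + b n) ∧
    (∀ (α : ℚ) (κ : ℕ) (b : ℕ → ℚ),
      Function.Periodic b (2 ^ κ) →
      (∀ m : ℕ, 0 < m → Function.Periodic b m → 2 ^ κ ≤ m) →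
      (∀ n : ℕ, (a n : ℚ) = α * (s n : ℚ) + b n) →
      α = scalingFactor a ∧ κ = kappa a) := by
  obtain rfl : s = binaryAsTernary := hs.unique isStanleySeq_binaryAsTernary
  have ha0 := hA.apply_zero
  refine ⟨⟨fun h => ?_, fun ⟨α, κ, b, h⟩ => ?_⟩, fun α κ b hb hmin hd => ?_⟩
  · exact ⟨_, _, _, isScalingDecomposition_of_independent ha0 h⟩
  · exact independent_of_isScalingDecomposition ha0 h
  have h : IsScalingDecomposition a binaryAsTernary α κ b := ⟨hb, hmin, hd⟩
  exact h.unique ha0 (isScalingDecomposition_of_independent ha0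
    (independent_of_isScalingDecomposition ha0 h))
end

section
/- Let S(A) = {a_n} be an independent Stanley sequence, let k ≥ κ(A), set c = a_{2^k} and A_k = {a_0, a_1, ..., a_{2^k − 1}}, and suppose a_{2^k − 1} ≥ λ(A) + ω(A). Then for all integers x < y, the sets (A_k + x) ∪ (A_k + c + x) and (A_k + y) ∪ (A_k + c + y) jointly cover every integer in the set ([2y − x, 3c + 2y − x) \ (O(A) + 2y − x)) ∪ (O(A) + 3c + 2y − x). -/
/-!
Write `c = a_{2^k}` and `A_k` for the first `2^k` terms. Independence at `k` and `k + 1`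
shows that the terms below `a_{2^{k+1}} = 3c` are exactly `A_k ∪ (A_k + c)`, so every
`w ∈ [0, 3c) \ O(A)` is a term of, or covered by, this block; translating a witness `p < q`
(or `w` itself) by `x` and `y` respectively gives a joint cover of `w + 2y - x`.
The bound `a_{2^k - 1} ≥ λ + ω` gives `ω < c`, so for `o ∈ O(A)` the integer `c + o ∈ (ω, 3c)`,
not being a term, is covered by the block. The same bound rules out covers using a term of
`A_k + c`, so `c + o` is covered by `A_k` alone, and translating by `x` and `c + y` covers
`o + 3c + 2y - x`.
-/

lemma ThreeFreeSet.mono {S T : Set ℤ} (h : S ⊆ T) (hT : ThreeFreeSet T) : ThreeFreeSet S :=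
  fun x hx y hy z hz hxy hyz => hT x (h hx) y (h hy) z (h hz) hxy hyz

lemma ThreeFreeSet.covers_of_not_union_singleton {S : Set ℤ} {t : ℤ} (hS : ThreeFreeSet S)
    (hlt : ∀ s ∈ S, s < t) (h : ¬ ThreeFreeSet (S ∪ {t})) : Covers S t := by
  by_contra hnc
  refine h fun X hX Y hY Z hZ hXY hYZ hsum => ?_
  have hle : ∀ u ∈ S ∪ {t}, u ≤ t := by
    rintro u (hu | rfl)
    exacts [(hlt u hu).le, le_rfl]
  have hXS : X ∈ S := hX.resolve_right fun hXt : X = t => by linarith [hle Z hZ]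
  have hYS : Y ∈ S := hY.resolve_right fun hYt : Y = t => by linarith [hle Z hZ]
  rcases hZ with hZ | rfl
  · exact hS X hXS Y hYS Z hZ hXY hYZ hsum
  · exact hnc ⟨X, Y, hXS, hYS, hXY, hYZ, by omega⟩

lemma Covers.mono {S T : Set ℤ} {w : ℤ} (hST : S ⊆ T) (h : Covers S w) : Covers T w := by
  obtain ⟨p, q, hp, hq, hpq, hqw, hsum⟩ := h
  exact ⟨p, q, hST hp, hST hq, hpq, hqw, hsum⟩

lemma JointlyCovers.mono {S S' T T' : Set ℤ} {w : ℤ} (hS : S ⊆ S') (hT : T ⊆ T')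
    (h : JointlyCovers S T w) : JointlyCovers S' T' w := by
  obtain ⟨p, q, hp, hq, hpq, hqw, hsum⟩ := h
  exact ⟨p, q, hS hp, hT hq, hpq, hqw, hsum⟩

lemma add_mem_shift {S : Set ℤ} {s : ℤ} (hs : s ∈ S) (t : ℤ) : s + t ∈ shift S t :=
  ⟨s, hs, rfl⟩

lemma shift_union_shift (S : Set ℤ) (c x : ℤ) :
    shift (S ∪ shift S c) x = shift S x ∪ shift S (c + x) := by
  simp only [shift, Set.image_union, Set.image_image, add_assoc]

lemma jointlyCovers_shift_of_mem {S : Set ℤ} {w x y : ℤ} (hw : w ∈ S) (hxy : x < y) :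
    JointlyCovers (shift S x) (shift S y) (w + 2 * y - x) :=
  ⟨w + x, w + y, add_mem_shift hw x, add_mem_shift hw y, by omega, by omega, by ring⟩

lemma Covers.jointlyCovers_shift {S : Set ℤ} {w x y : ℤ} (hw : Covers S w) (hxy : x < y) :
    JointlyCovers (shift S x) (shift S y) (w + 2 * y - x) := by
  obtain ⟨p, q, hp, hq, hpq, hqw, hsum⟩ := hw
  exact ⟨p + x, q + y, add_mem_shift hp x, add_mem_shift hq y, by omega, by omega, by omega⟩

namespace IsStanleySeq

variable {A : Finset ℤ} {a : ℕ → ℤ}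

lemma strictMono (hA : IsStanleySeq A a) : StrictMono a := hA.2.2.2.1

lemma nonneg (hA : IsStanleySeq A a) (n : ℕ) : 0 ≤ a n :=
  (hA.2.1 _ (hA.2.2.2.2.1 0 (Finset.card_pos.2 ⟨0, hA.1⟩))).trans
    (hA.strictMono.monotone n.zero_le)

lemma threeFreeSet_image_Iio (hA : IsStanleySeq A a) (n : ℕ) :
    ThreeFreeSet (a '' Set.Iio n) := by
  obtain ⟨-, -, hfree, -, hmem, hleast⟩ := hA
  cases n with
  | zero => simp [ThreeFreeSet]
  | succ m =>
    by_cases hm : A.card ≤ m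
    · rw [← Order.succ_eq_add_one, Order.Iio_succ_eq_insert, Set.image_insert_eq,
        Set.insert_eq, Set.union_comm]
      exact (hleast m hm).1.2
    · exact hfree.mono fun _ ⟨i, hi, hai⟩ =>
        hai ▸ hmem i ((Set.mem_Iio.1 hi).trans_le (by omega))

lemma covers_image_Iio_of_lt_of_lt (hA : IsStanleySeq A a) {n : ℕ} (hn : A.card ≤ n) {t : ℤ}
    (hlow : a (n - 1) < t) (hhigh : t < a n) : Covers (a '' Set.Iio n) t := by
  refine (hA.threeFreeSet_image_Iio n).covers_of_not_union_singleton ?_ fun hfree => ?_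
  · rintro _ ⟨i, hi, rfl⟩
    exact (hA.strictMono.monotone (Nat.le_sub_one_of_lt hi)).trans_lt hlow
  · exact hhigh.not_ge ((hA.2.2.2.2.2 n hn).2 ⟨hlow, hfree⟩)

lemma le_of_mem_OSet (hA : IsStanleySeq A a) {t : ℤ} (ht : t ∈ OSet a) :
    t ≤ a (A.card - 1) := by
  obtain ⟨-, hnot_mem, hnot_covers⟩ := ht
  by_contra! hgt
  have hbelow : ∀ n, a n < t := by
    intro n
    induction n with
    | zero => exact (hA.strictMono.monotone (Nat.zero_le _)).trans_lt hgt
    | succ n ih =>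
      rcases le_or_gt (n + 1) (A.card - 1) with hn | hn
      · exact (hA.strictMono.monotone hn).trans_lt hgt
      refine lt_of_le_of_ne (not_lt.1 fun hlt => hnot_covers ?_) fun h => hnot_mem ⟨_, h⟩
      exact (hA.covers_image_Iio_of_lt_of_lt (by omega) ih hlt).mono (Set.image_subset_range _ _)
  exact hA.strictMono.not_bddAbove_range_of_isSuccArchimedean
    ⟨t, Set.forall_mem_range.2 fun n => (hbelow n).le⟩

lemma le_omegaA (hA : IsStanleySeq A a) {o : ℤ} (ho : o ∈ OSet a) : o ≤ omegaA a :=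
  le_csSup ⟨_, fun _ => hA.le_of_mem_OSet⟩ ho

end IsStanleySeq

section Independence

variable {a : ℕ → ℤ}

lemma Independent.indepParams_kappa (hInd : Independent a) :
    IndepParams a (lambdaA a) (kappa a) := by
  obtain ⟨lam₀, κ₀, h₀⟩ := hInd
  obtain ⟨lam, hlam⟩ : ∃ lam, IndepParams a lam (kappa a) :=
    Nat.sInf_mem (s := {κ | ∃ lam, IndepParams a lam κ}) ⟨κ₀, lam₀, h₀⟩
  have hlam_eq : lambdaA a = lam := by
    have := (hlam (kappa a) le_rfl).2
    unfold lambdaA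
    omega
  exact hlam_eq ▸ hlam

lemma IndepParams.apply_two_pow_succ_s8 {lam : ℤ} {κ k : ℕ} (h : IndepParams a lam κ)
    (hk : κ ≤ k) : a (2 ^ (k + 1)) = 3 * a (2 ^ k) := by
  obtain ⟨hrec, hk_eq⟩ := h k hk
  have hpred : a (2 ^ (k + 1) - 1) = a (2 ^ k) + a (2 ^ k - 1) := by
    rw [← hrec _ (Nat.sub_lt (Nat.two_pow_pos k) one_pos)]
    congr 1
    have := Nat.two_pow_pos k
    rw [pow_succ]
    omega
  rw [(h (k + 1) (hk.trans k.le_succ)).2, hpred]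
  omega

lemma image_Iio_two_pow_succ {k : ℕ} (hrec : ∀ i < 2 ^ k, a (2 ^ k + i) = a (2 ^ k) + a i) :
    a '' Set.Iio (2 ^ (k + 1)) =
      a '' Set.Iio (2 ^ k) ∪ shift (a '' Set.Iio (2 ^ k)) (a (2 ^ k)) := by
  ext t
  simp only [shift, Set.mem_union, Set.mem_image, Set.mem_Iio, exists_exists_and_eq_and, pow_succ]
  constructor
  · rintro ⟨n, hn, rfl⟩
    rcases lt_or_ge n (2 ^ k) with hlt | hge
    · exact Or.inl ⟨n, hlt, rfl⟩
    · refine Or.inr ⟨n - 2 ^ k, by omega, ?_⟩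
      rw [add_comm, ← hrec _ (by omega), Nat.add_sub_cancel' hge]
  · rintro (⟨i, hi, rfl⟩ | ⟨i, hi, rfl⟩)
    · exact ⟨i, by omega, rfl⟩
    · exact ⟨2 ^ k + i, by omega, by rw [hrec i hi, add_comm]⟩

end Independence

lemma mem_image_Iio_or_covers_of_not_mem_OSet {a : ℕ → ℤ} (hmono : StrictMono a) {n : ℕ}
    {w : ℤ} (hw0 : 0 ≤ w) (hwn : w < a n) (hwO : w ∉ OSet a) :
    w ∈ a '' Set.Iio n ∨ Covers (a '' Set.Iio n) w := by
  have hlow : ∀ m, a m < a n → a m ∈ a '' Set.Iio n :=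
    fun m hm => ⟨m, hmono.lt_iff_lt.1 hm, rfl⟩
  by_contra! h
  refine hwO ⟨hw0, fun ⟨m, hm⟩ => h.1 (hm ▸ hlow m (hm ▸ hwn)), fun hcov => h.2 ?_⟩
  obtain ⟨_, _, ⟨i, rfl⟩, ⟨j, rfl⟩, hij, hjw, hsum⟩ := hcov
  exact ⟨a i, a j, hlow i (by omega), hlow j (by omega), hij, hjw, hsum⟩

lemma IsStanleySeq.covers_add_of_mem_OSet {A : Finset ℤ} {a : ℕ → ℤ} {lam : ℤ} {κ k : ℕ}
    (hA : IsStanleySeq A a) (hpar : IndepParams a lam κ) (hk : κ ≤ k)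
    (hbound : lam + omegaA a ≤ a (2 ^ k - 1)) {o : ℤ} (ho : o ∈ OSet a) :
    Covers (a '' Set.Iio (2 ^ k)) (a (2 ^ k) + o) := by
  obtain ⟨hrec, hc⟩ := hpar k hk
  have hblock := image_Iio_two_pow_succ hrec
  have h3c := hpar.apply_two_pow_succ_s8 hk
  have hlast_lt : a (2 ^ k - 1) < a (2 ^ k) :=
    hA.strictMono (Nat.sub_lt (Nat.two_pow_pos k) one_pos)
  have hAk : ∀ p ∈ a '' Set.Iio (2 ^ k), 0 ≤ p ∧ p ≤ a (2 ^ k - 1) := by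
    rintro _ ⟨i, hi, rfl⟩
    exact ⟨hA.nonneg i, hA.strictMono.monotone (Nat.le_sub_one_of_lt hi)⟩
  have ho_le := hA.le_omegaA ho
  obtain ⟨ho0, ho_range, ho_covers⟩ := ho
  have hω_lt : omegaA a < a (2 ^ k) := by linarith [hA.nonneg (2 ^ k - 1)]
  have hwO : a (2 ^ k) + o ∉ OSet a := fun h => by linarith [hA.le_omegaA h]
  have hw := mem_image_Iio_or_covers_of_not_mem_OSet (n := 2 ^ (k + 1)) hA.strictMono
    (by omega) (by omega) hwO
  rw [hblock] at hw
  rcases hw with (hmem | ⟨p, ⟨i, -, rfl⟩, he⟩) | ⟨p, q, hp, hq, hpq, hqw, hsum⟩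
  · linarith [(hAk _ hmem).2]
  · exact absurd ⟨i, by linarith⟩ ho_range
  rcases hq with hq | ⟨q, ⟨j, -, rfl⟩, rfl⟩
  · rcases hp with hp | ⟨p, hp, rfl⟩
    · exact ⟨p, q, hp, hq, hpq, hqw, hsum⟩
    · linarith [(hAk _ hp).1, (hAk _ hq).2]
  exfalso
  rcases hp with hp | ⟨p, ⟨i, -, rfl⟩, rfl⟩
  -- `c + 2 a_j = p + o ≤ a_{2^k - 1} + ω < c`
  · linarith [(hAk _ hp).2, hA.nonneg j]
  · exact ho_covers
      ⟨a i, a j, ⟨i, rfl⟩, ⟨j, rfl⟩, by linarith, by linarith, by linarith⟩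

/-- Lemma 3.2(d): for `x < y`, `(A_k + x) ∪ (A_k + c + x)` and
`(A_k + y) ∪ (A_k + c + y)` jointly cover
`([2y−x, 3c+2y−x) \ (O(A) + 2y − x)) ∪ (O(A) + 3c + 2y − x)`. -/
theorem cover_part_d (A : Finset ℤ) (a : ℕ → ℤ)
    (hA : IsStanleySeq A a) (hInd : Independent a) (k : ℕ) (hk : kappa a ≤ k)
    (c : ℤ) (hc : c = a (2 ^ k))
    (Ak : Set ℤ) (hAk : Ak = a '' Set.Iio (2 ^ k))
    (hbound : lambdaA a + omegaA a ≤ a (2 ^ k - 1)) :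
    ∀ x y : ℤ, x < y →
      ∀ z ∈ (Set.Ico (2 * y - x) (3 * c + 2 * y - x) \ shift (OSet a) (2 * y - x)) ∪
          shift (OSet a) (3 * c + 2 * y - x),
        JointlyCovers (shift Ak x ∪ shift Ak (c + x)) (shift Ak y ∪ shift Ak (c + y)) z := by
  subst hc hAk
  have hpar := hInd.indepParams_kappa
  intro x y hxy z hz
  rcases hz with ⟨⟨hz_low, hz_high⟩, hz_O⟩ | ⟨o, ho, rfl⟩
  · obtain ⟨w, rfl⟩ : ∃ w, z = w + 2 * y - x := ⟨z - 2 * y + x, by ring⟩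
    have hwO : w ∉ OSet a := fun hw => hz_O ⟨w, hw, (add_sub_assoc _ _ _).symm⟩
    rw [← shift_union_shift, ← shift_union_shift, ← image_Iio_two_pow_succ (hpar k hk).1]
    rcases mem_image_Iio_or_covers_of_not_mem_OSet hA.strictMono (by omega)
      (by rw [hpar.apply_two_pow_succ_s8 hk]; omega) hwO with hw | hw
    · exact jointlyCovers_shift_of_mem hw hxy
    · exact hw.jointlyCovers_shift hxy
  · have hc_nonneg := hA.nonneg (2 ^ k)
    have hcover := (hA.covers_add_of_mem_OSet hpar hk hbound ho).jointlyCovers_shift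
      (show x < a (2 ^ k) + y by omega)
    convert hcover.mono Set.subset_union_left Set.subset_union_right using 1
    ring
end
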